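/- arXiv:1602.01035 — 4 statements merged into one kernel-verified Lean document; each statement's English description precedes it below -/
import Mathlib

section
/- Let F be a free group and let μ be the Magnus expansion. For every k ≥ 1, if w ∈ F^k (the k-th lower central series term), then μ(w) = 1 + (terms of degree ≥ k). Consequently, if μ(w) has a nonzero term of degree d with d < k, then w ∉ F^k. -/
set_option linter.unusedSectionVars false

noncomputable section

/-- Noncommutative formal power series over `ℤ` in variables indexed by `σ`:
coefficient functions on words (the value at a word `w` is the coefficient of the
monomial `X_{w 0} * X_{w 1} * ⋯`), with the convolution product. This is the ring
`ℤ⟨⟨X_i : i ∈ σ⟩⟩`. -/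
def NCSeries (σ : Type) : Type := List σ → ℤ

namespace NCSeries

variable {σ : Type} [DecidableEq σ]

instance : AddCommGroup (NCSeries σ) := Pi.addCommGroup

instance : One (NCSeries σ) := ⟨fun w => if w = [] then 1 else 0⟩

instance : Mul (NCSeries σ) :=
  ⟨fun f g w => ∑ i ∈ Finset.range (w.length + 1), f (w.take i) * g (w.drop i)⟩

theorem mul_def (f g : NCSeries σ) (w : List σ) :
    (f * g) w = ∑ i ∈ Finset.range (w.length + 1), f (w.take i) * g (w.drop i) := rfl

theorem one_def (w : List σ) : (1 : NCSeries σ) w = if w = [] then 1 else 0 := rfl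

theorem add_def (f g : NCSeries σ) (w : List σ) : (f + g) w = f w + g w := rfl

instance instRing : Ring (NCSeries σ) :=
  { (inferInstance : AddCommGroup (NCSeries σ)),
    (inferInstance : One (NCSeries σ)),
    (inferInstance : Mul (NCSeries σ)) with
    left_distrib := by
      intro f g h; funext w
      show (f * (g + h)) w = (f * g) w + (f * h) w
      simp only [mul_def]
      rw [← Finset.sum_add_distrib]
      exact Finset.sum_congr rfl fun i _ => mul_add _ _ _
    right_distrib := by
      intro f g h; funext w
      show ((f + g) * h) w = (f * h) w + (g * h) w
      simp only [mul_def]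
      rw [← Finset.sum_add_distrib]
      exact Finset.sum_congr rfl fun i _ => add_mul _ _ _
    zero_mul := by
      intro f; funext w
      show ((0 : NCSeries σ) * f) w = 0
      simp only [mul_def]
      exact Finset.sum_eq_zero fun i _ => zero_mul _
    mul_zero := by
      intro f; funext w
      show (f * (0 : NCSeries σ)) w = 0
      simp only [mul_def]
      exact Finset.sum_eq_zero fun i _ => mul_zero _
    one_mul := by
      intro f; funext w
      rw [mul_def, Finset.sum_eq_single 0]
      · simp [one_def]
      · intro i hi hne
        have hw : w ≠ [] := by
          intro h; subst h; simp [Finset.mem_range] at hi; omega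
        have ht : w.take i ≠ [] := by
          simp [List.take_eq_nil_iff, hne, hw]
        simp [one_def, ht]
      · intro h; simp at h
    mul_one := by
      intro f; funext w
      rw [mul_def, Finset.sum_eq_single w.length]
      · simp [one_def]
      · intro i hi hne
        have hd : w.drop i ≠ [] := by
          simp [List.drop_eq_nil_iff]
          simp [Finset.mem_range] at hi
          omega
        simp [one_def, hd]
      · intro h; simp at h
    mul_assoc := by
      intro f g h; funext w
      show (f * g * h) w = (f * (g * h)) w
      rw [mul_def, mul_def]
      have L : ∀ j ∈ Finset.range (w.length + 1),
          (f * g) (w.take j) * h (w.drop j) =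
            ∑ i ∈ Finset.range (j + 1),
              f (w.take i) * (g (List.take (j - i) (w.drop i)) * h (w.drop j)) := by
        intro j hj
        simp only [Finset.mem_range] at hj
        rw [mul_def, Finset.sum_mul]
        have hlen : (w.take j).length = j := by
          rw [List.length_take]; omega
        rw [hlen]
        refine Finset.sum_congr rfl fun i hi => ?_
        simp only [Finset.mem_range] at hi
        rw [List.take_take, List.drop_take, min_eq_left (by omega : i ≤ j), mul_assoc]
      have R : ∀ i ∈ Finset.range (w.length + 1),
          f (w.take i) * (g * h) (w.drop i) =
            ∑ j ∈ Finset.Icc i w.length,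
              f (w.take i) * (g (List.take (j - i) (w.drop i)) * h (w.drop j)) := by
        intro i hi
        simp only [Finset.mem_range] at hi
        rw [mul_def, Finset.mul_sum, List.length_drop]
        refine Finset.sum_nbij' (i := fun t => i + t) (j := fun j => j - i) ?_ ?_ ?_ ?_ ?_
        · intro t ht; simp only [Finset.mem_range] at ht; simp only [Finset.mem_Icc]; omega
        · intro j hj; simp only [Finset.mem_Icc] at hj; simp only [Finset.mem_range]; omega
        · intro t ht; beta_reduce; omega
        · intro j hj; simp only [Finset.mem_Icc] at hj; beta_reduce; omega
        · intro t ht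
          have e : i + t - i = t := by omega
          rw [e, List.drop_drop]
      rw [Finset.sum_congr rfl L, Finset.sum_congr rfl R]
      rw [Finset.sum_sigma', Finset.sum_sigma']
      refine Finset.sum_nbij' (i := fun p => ⟨p.2, p.1⟩) (j := fun p => ⟨p.2, p.1⟩)
        ?_ ?_ ?_ ?_ ?_
      · rintro ⟨j, i⟩ hp
        simp only [Finset.mem_sigma, Finset.mem_range, Finset.mem_Icc] at hp ⊢
        omega
      · rintro ⟨i, j⟩ hp
        simp only [Finset.mem_sigma, Finset.mem_range, Finset.mem_Icc] at hp ⊢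
        omega
      · rintro ⟨j, i⟩ _; rfl
      · rintro ⟨i, j⟩ _; rfl
      · rintro ⟨j, i⟩ _; rfl }

/-- The variable `X i`. -/
def X (i : σ) : NCSeries σ := fun w => if w = [i] then 1 else 0

/-- The geometric series `1 - X i + X i ^ 2 - ⋯`, inverse of `1 + X i`. -/
def geom (i : σ) : NCSeries σ :=
  fun w => if w = List.replicate w.length i then (-1 : ℤ) ^ w.length else 0

theorem oneAddX_mul_geom (i : σ) : ((1 + X i) * geom i : NCSeries σ) = 1 := by
  funext w
  cases w with
  | nil => simp [mul_def, one_def, X, geom, add_def]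
  | cons a t =>
    rw [mul_def]
    have hlen : (a :: t).length + 1 = t.length + 1 + 1 := rfl
    rw [hlen, Finset.sum_range_succ', Finset.sum_range_succ']
    have hz : ∀ j ∈ Finset.range t.length,
        ((1 + X i) : NCSeries σ) ((a :: t).take (j + 1 + 1)) * geom i ((a :: t).drop (j + 1 + 1))
          = 0 := by
      intro j hj
      simp only [Finset.mem_range] at hj
      have hl : ((a :: t).take (j + 1 + 1)).length = j + 2 := by
        rw [List.length_take]; simp; omega
      have h1 : (a :: t).take (j + 1 + 1) ≠ [] := by
        intro h; rw [h] at hl; simp at hl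
      have h2 : (a :: t).take (j + 1 + 1) ≠ [i] := by
        intro h; rw [h] at hl; simp at hl
      rw [add_def, one_def, if_neg h1]
      show (0 + if _ = [i] then _ else _) * _ = 0
      rw [if_neg h2]
      simp
    rw [Finset.sum_congr rfl hz]
    simp only [Finset.sum_const_zero, zero_add]
    show ((1 + X i) : NCSeries σ) [a] * geom i t + ((1 + X i) : NCSeries σ) [] * geom i (a :: t)
        = (1 : NCSeries σ) (a :: t)
    rw [add_def, add_def, one_def, one_def, if_neg (by simp), if_pos rfl]
    show (0 + X i [a]) * geom i t + (1 + X i []) * geom i (a :: t) = (1 : NCSeries σ) (a :: t)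
    rw [one_def, if_neg (by simp)]
    by_cases hai : a = i
    · subst hai
      rw [show X a [a] = 1 from if_pos rfl, show X a [] = 0 from if_neg (by simp)]
      have hg : geom a (a :: t) = -(geom a t) := by
        simp only [geom, List.length_cons, List.replicate_succ, List.cons.injEq, true_and]
        by_cases ht : t = List.replicate t.length a
        · rw [if_pos ht, if_pos ht]; ring
        · rw [if_neg ht, if_neg ht]; ring
      rw [hg]; ring
    · rw [show X i [a] = 0 from if_neg (by simp [hai]), show X i [] = 0 from if_neg (by simp)]
      have hg : geom i (a :: t) = 0 := by
        simp only [geom, List.length_cons, List.replicate_succ]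
        rw [if_neg (by simp [hai])]
      rw [hg]; ring

theorem geom_mul_oneAddX (i : σ) : (geom i * (1 + X i) : NCSeries σ) = 1 := by
  funext w
  induction w using List.reverseRecOn with
  | nil => simp [mul_def, one_def, X, geom, add_def]
  | append_singleton t a _ =>
    rw [mul_def]
    have hlen : (t ++ [a]).length + 1 = t.length + 1 + 1 := by simp
    rw [hlen, Finset.sum_range_succ, Finset.sum_range_succ]
    have hz : ∀ j ∈ Finset.range t.length,
        geom i ((t ++ [a]).take j) * ((1 + X i) : NCSeries σ) ((t ++ [a]).drop j) = 0 := by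
      intro j hj
      simp only [Finset.mem_range] at hj
      have hl : ((t ++ [a]).drop j).length = t.length + 1 - j := by
        rw [List.length_drop]; simp
      have h1 : (t ++ [a]).drop j ≠ [] := by
        intro h; rw [h] at hl; simp at hl; omega
      have h2 : (t ++ [a]).drop j ≠ [i] := by
        intro h; rw [h] at hl; simp at hl; omega
      rw [add_def, one_def, if_neg h1]
      show _ * (0 + if _ = [i] then _ else _) = 0
      rw [if_neg h2]
      simp
    rw [Finset.sum_congr rfl hz]
    simp only [Finset.sum_const_zero, zero_add]
    have htake : (t ++ [a]).take t.length = t := by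
      rw [List.take_left']; simp
    have hdrop : (t ++ [a]).drop t.length = [a] := by
      rw [List.drop_left']; simp
    have htake' : (t ++ [a]).take (t.length + 1) = t ++ [a] := by
      apply List.take_of_length_le; simp
    have hdrop' : (t ++ [a]).drop (t.length + 1) = [] := by
      apply List.drop_of_length_le; simp
    rw [htake, hdrop, htake', hdrop']
    rw [add_def, add_def, one_def, one_def, if_neg (by simp), if_pos rfl]
    show geom i t * (0 + X i [a]) + geom i (t ++ [a]) * (1 + X i []) = (1 : NCSeries σ) (t ++ [a])
    rw [one_def, if_neg (by simp)]
    by_cases hai : a = i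
    · subst hai
      rw [show X a [a] = 1 from if_pos rfl, show X a [] = 0 from if_neg (by simp)]
      have hg : geom a (t ++ [a]) = -(geom a t) := by
        simp only [geom, List.length_append, List.length_singleton]
        have : List.replicate (t.length + 1) a = List.replicate t.length a ++ [a] := by
          rw [List.replicate_succ']
        rw [this]
        by_cases ht : t = List.replicate t.length a
        · rw [if_pos (by rw [← ht]), if_pos ht]; ring
        · rw [if_neg (by simpa using ht), if_neg ht]; ring
      rw [hg]; ring
    · rw [show X i [a] = 0 from if_neg (by simp [hai]), show X i [] = 0 from if_neg (by simp)]
      have hg : geom i (t ++ [a]) = 0 := by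
        simp only [geom, List.length_append, List.length_singleton]
        rw [if_neg]
        intro h
        rw [List.replicate_succ'] at h
        have := (List.append_inj' h (by simp)).2
        simp at this
        exact hai this
      rw [hg]; ring

/-- `1 + X i` as a unit of the power series ring, with inverse the geometric series
`1 - X i + X i ^ 2 - ⋯`. -/
def oneAddX (i : σ) : (NCSeries σ)ˣ where
  val := 1 + X i
  inv := geom i
  val_inv := oneAddX_mul_geom i
  inv_val := geom_mul_oneAddX i

end NCSeries

/-- The Magnus expansion: the group homomorphism from the free group on `N` generators
to the group of units of `ℤ⟨⟨X₁, …, X_N⟩⟩` sending the generator `xᵢ` to `1 + Xᵢ`. -/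
def magnus (N : ℕ) : FreeGroup (Fin N) →* (NCSeries (Fin N))ˣ :=
  FreeGroup.lift fun i => NCSeries.oneAddX i

/-!
The units `1 + (terms of degree ≥ k)` form a filtration `U k` of the unit group of
`ℤ⟨⟨X⟩⟩` with `⁅U j, U k⁆ ≤ U (j + k)`, because `a b - b a = (a - 1)(b - 1) - (b - 1)(a - 1)`.
Since `μ` maps the free group into `U 1`, the preimages `μ⁻¹(U (n + 1))` form a descending
central series, which therefore contains the lower central series.
-/

open scoped commutatorElement

namespace NCSeries

variable {σ : Type} [DecidableEq σ]

def degreeGE (k : ℕ) : AddSubgroup (NCSeries σ) where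
  carrier := {f | ∀ u : List σ, u.length < k → f u = 0}
  zero_mem' _ _ := rfl
  add_mem' hf hg u hu := by
    show _ + _ = (0 : ℤ)
    rw [hf u hu, hg u hu, add_zero]
  neg_mem' hf u hu := by
    show -_ = (0 : ℤ)
    rw [hf u hu, neg_zero]

theorem mem_degreeGE_zero (f : NCSeries σ) : f ∈ degreeGE 0 := fun _ hu => absurd hu (by omega)

theorem degreeGE_antitone : Antitone (degreeGE (σ := σ)) :=
  fun _ _ hjk _ hf u hu => hf u (lt_of_lt_of_le hu hjk)

theorem mul_mem_degreeGE {j k : ℕ} {f g : NCSeries σ} (hf : f ∈ degreeGE j)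
    (hg : g ∈ degreeGE k) : f * g ∈ degreeGE (j + k) := by
  intro u hu
  refine Finset.sum_eq_zero fun i _ => ?_
  by_cases hi : (u.take i).length < j
  · rw [hf _ hi, zero_mul]
  · rw [List.length_take] at hi
    rw [hg _ (by rw [List.length_drop]; omega), mul_zero]

def unitsFiltration (k : ℕ) : Subgroup (NCSeries σ)ˣ where
  carrier := {a | (a : NCSeries σ) - 1 ∈ degreeGE k}
  one_mem' := by simp
  mul_mem' {a b} ha hb := by
    have hab : ((a * b : (NCSeries σ)ˣ) : NCSeries σ) - 1 =
        (a - 1) * (b - 1) + (a - 1) + (b - 1) := by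
      rw [Units.val_mul]; noncomm_ring
    show _ ∈ degreeGE k
    rw [hab]
    exact add_mem (add_mem (by simpa using mul_mem_degreeGE ha (mem_degreeGE_zero _)) ha) hb
  inv_mem' {a} ha := by
    have hinv : ((a⁻¹ : (NCSeries σ)ˣ) : NCSeries σ) - 1 = -(↑a⁻¹ * (a - 1)) := by
      rw [mul_sub, mul_one, a.inv_mul, neg_sub]
    show _ ∈ degreeGE k
    rw [hinv]
    exact neg_mem (by simpa using mul_mem_degreeGE (mem_degreeGE_zero _) ha)

theorem mem_unitsFiltration {k : ℕ} {a : (NCSeries σ)ˣ} :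
    a ∈ unitsFiltration k ↔ (a : NCSeries σ) - 1 ∈ degreeGE k := Iff.rfl

theorem commutator_mem_unitsFiltration {j k : ℕ} {a b : (NCSeries σ)ˣ}
    (ha : a ∈ unitsFiltration j) (hb : b ∈ unitsFiltration k) :
    ⁅a, b⁆ ∈ unitsFiltration (j + k) := by
  rw [mem_unitsFiltration] at ha hb ⊢
  have hcomm : ((⁅a, b⁆ : (NCSeries σ)ˣ) : NCSeries σ) - 1 =
      ((a - 1) * (b - 1) - (b - 1) * (a - 1)) * ↑(a⁻¹ * b⁻¹) := by
    have hpoly : ((a : NCSeries σ) - 1) * (b - 1) - (b - 1) * (a - 1) = a * b - b * a := by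
      noncomm_ring
    have hba : (b * a * (a⁻¹ * b⁻¹) : NCSeries σ) = 1 := by
      simp [mul_assoc]
    rw [hpoly, sub_mul, Units.val_mul, hba, commutatorElement_def]
    simp only [Units.val_mul, mul_assoc]
  rw [hcomm]
  have hba_mem := mul_mem_degreeGE hb ha
  rw [add_comm] at hba_mem
  simpa using mul_mem_degreeGE (sub_mem (mul_mem_degreeGE ha hb) hba_mem) (mem_degreeGE_zero _)

theorem oneAddX_mem_unitsFiltration_one (i : σ) : oneAddX i ∈ unitsFiltration 1 := by
  intro u hu
  rw [List.length_eq_zero_iff.mp (Nat.lt_one_iff.mp hu)]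
  show (1 + X i - 1 : NCSeries σ) [] = 0
  rw [add_sub_cancel_left]
  rfl

theorem lowerCentralSeries_le_comap_unitsFiltration {G : Type*} [Group G]
    (f : G →* (NCSeries σ)ˣ) (hf : ∀ g, f g ∈ unitsFiltration 1) (n : ℕ) :
    (⊤ : Subgroup G).lowerCentralSeries n ≤ (unitsFiltration (n + 1)).comap f := by
  refine Subgroup.descending_central_series_ge_lower (fun n ↦ (unitsFiltration (n + 1)).comap f)
    ⟨?_, fun x m hx g => ?_⟩ n
  · exact eq_top_iff.mpr fun g _ => hf g
  · rw [Subgroup.mem_comap, map_commutatorElement]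
    exact commutator_mem_unitsFiltration hx (hf g)

end NCSeries

open NCSeries

theorem magnus_mem_unitsFiltration_one (N : ℕ) (w : FreeGroup (Fin N)) :
    magnus N w ∈ unitsFiltration 1 :=
  FreeGroup.range_lift_le (by rintro _ ⟨i, rfl⟩; exact oneAddX_mem_unitsFiltration_one i)
    ⟨w, rfl⟩

theorem magnus_lcs_general (N k : ℕ) :
    (∀ w ∈ (⊤ : Subgroup (FreeGroup (Fin N))).lowerCentralSeries (k - 1), ∀ u : List (Fin N),
      u.length < k →
        ((magnus N w : (NCSeries (Fin N))ˣ) : NCSeries (Fin N)) u = (1 : NCSeries (Fin N)) u) ∧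
    (∀ w : FreeGroup (Fin N),
      (∃ u : List (Fin N), u.length < k ∧
        ((magnus N w : (NCSeries (Fin N))ˣ) : NCSeries (Fin N)) u ≠ (1 : NCSeries (Fin N)) u) →
      w ∉ (⊤ : Subgroup (FreeGroup (Fin N))).lowerCentralSeries (k - 1)) := by
  have hlow : ∀ w ∈ (⊤ : Subgroup (FreeGroup (Fin N))).lowerCentralSeries (k - 1),
      ∀ u : List (Fin N), u.length < k →
        ((magnus N w : (NCSeries (Fin N))ˣ) : NCSeries (Fin N)) u = (1 : NCSeries (Fin N)) u := by
    intro w hw u hu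
    have hmem : magnus N w ∈ unitsFiltration (k - 1 + 1) :=
      lowerCentralSeries_le_comap_unitsFiltration (magnus N) (magnus_mem_unitsFiltration_one N)
        (k - 1) hw
    exact sub_eq_zero.mp (degreeGE_antitone (by omega : k ≤ k - 1 + 1) hmem u hu)
  exact ⟨hlow, fun w ⟨u, hu, hne⟩ hw => hne (hlow w hw u hu)⟩

/-- For every `k ≥ 1`: if `w ∈ F^k` (paper's lower central series, Mathlib's
`lowerCentralSeries F (k-1)`), then `μ(w) = 1 + (terms of degree ≥ k)`, i.e. the
coefficients of `μ(w)` and of `1` agree on all words of length `< k`. Consequently,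
if `μ(w)` has a coefficient differing from that of `1` at some word of length `< k`
(a nonzero term of degree `d < k`), then `w ∉ F^k`. -/
theorem magnus_lcs (N k : ℕ) (hk : 1 ≤ k) :
    (∀ w ∈ (⊤ : Subgroup (FreeGroup (Fin N))).lowerCentralSeries (k - 1), ∀ u : List (Fin N),
      u.length < k →
        ((magnus N w : (NCSeries (Fin N))ˣ) : NCSeries (Fin N)) u = (1 : NCSeries (Fin N)) u) ∧
    (∀ w : FreeGroup (Fin N),
      (∃ u : List (Fin N), u.length < k ∧
        ((magnus N w : (NCSeries (Fin N))ˣ) : NCSeries (Fin N)) u ≠ (1 : NCSeries (Fin N)) u) →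
      w ∉ (⊤ : Subgroup (FreeGroup (Fin N))).lowerCentralSeries (k - 1)) :=
  magnus_lcs_general N k

end
end

section
/- Let F be the free group on generators m_1 and m_2, and define inductively m = [m_1, m_2]. More generally, define a sequence of elements by Bing doubling: starting from one generator, each doubling step replaces a generator g by the commutator [g_1, g_2] of two new generators. After n doubling steps (producing 2^n generators), the resulting element lies in F^{2^n} but not in F^{2^n + 1} of the free group on those 2^n generators. -/
/-!
Upper bound: `⁅γ m, γ n⁆ ≤ γ (m + n + 1)` for the lower central series (three subgroups lemma),
so an iterated commutator of weight `2 ^ n` lies in `γ (2 ^ n - 1)`.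

Lower bound: send the `i`-th generator to the elementary matrix `1 + E i (i+1)` over `ℤ` of size
`2 ^ n + 1`. Since `⁅1 + E a b, 1 + E b c⁆ = 1 + E a c`, Bing doubling goes to `1 + E 0 (2 ^ n)`.
The units `u` with `u - 1` and `u⁻¹ - 1` vanishing below the `k`-th superdiagonal form a filtration
in which commutators add the indices, so `γ (2 ^ n)` lands in the `(2 ^ n + 1)`-st step, which
does not contain `1 + E 0 (2 ^ n)`.
-/

open scoped commutatorElement in
/-- The result of `n` Bing doubling steps: starting from a single free generator, each
step replaces a generator `g` by the commutator `[g₁, g₂]` of two fresh generators,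
producing an iterated commutator in the free group on `2^n` generators. -/
def bing : (n : ℕ) → FreeGroup (Fin (2 ^ n))
  | 0 => FreeGroup.of ⟨0, by norm_num⟩
  | n + 1 =>
    ⁅FreeGroup.map (fun i : Fin (2 ^ n) =>
        (⟨i.1, by have := i.2; have h : 2 ^ (n + 1) = 2 ^ n + 2 ^ n := by rw [pow_succ]; ring
                  omega⟩ : Fin (2 ^ (n + 1)))) (bing n),
      FreeGroup.map (fun i : Fin (2 ^ n) =>
        (⟨2 ^ n + i.1, by have := i.2; have h : 2 ^ (n + 1) = 2 ^ n + 2 ^ n := by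
                            rw [pow_succ]; ring
                          omega⟩ : Fin (2 ^ (n + 1)))) (bing n)⁆

open scoped commutatorElement

namespace Subgroup

variable {G : Type*} [Group G]

theorem commutator_commutator_le_of_rotate {H₁ H₂ H₃ N : Subgroup G} [N.Normal]
    (h1 : ⁅⁅H₂, H₃⁆, H₁⁆ ≤ N) (h2 : ⁅⁅H₃, H₁⁆, H₂⁆ ≤ N) : ⁅⁅H₁, H₂⁆, H₃⁆ ≤ N := by
  have le_iff_map_eq_bot (K : Subgroup G) : K ≤ N ↔ K.map (QuotientGroup.mk' N) = ⊥ := by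
    rw [map_eq_bot_iff, QuotientGroup.ker_mk']
  simp only [le_iff_map_eq_bot, map_commutator] at h1 h2 ⊢
  exact commutator_commutator_eq_bot_of_rotate h1 h2

theorem commutator_lowerCentralSeries_le (m n : ℕ) :
    ⁅lowerCentralSeries (⊤ : Subgroup G) m, lowerCentralSeries (⊤ : Subgroup G) n⁆ ≤
      lowerCentralSeries (⊤ : Subgroup G) (m + n + 1) := by
  induction n generalizing m with
  | zero => rfl
  | succ n ih =>
    rw [lowerCentralSeries_succ, commutator_comm]
    refine commutator_commutator_le_of_rotate ?_ ?_
    · rw [commutator_comm ⊤, ← lowerCentralSeries_succ]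
      exact (ih (m + 1)).trans_eq (congrArg _ (by omega))
    · calc ⁅⁅lowerCentralSeries ⊤ m, lowerCentralSeries ⊤ n⁆, ⊤⁆
          ≤ ⁅lowerCentralSeries ⊤ (m + n + 1), ⊤⁆ := commutator_mono (ih m) le_rfl
        _ = lowerCentralSeries ⊤ (m + (n + 1) + 1) := by rw [← lowerCentralSeries_succ]; rfl

theorem map_mem_lowerCentralSeries {K : Type*} [Group K] (f : G →* K) {x : G} {k : ℕ}
    (hx : x ∈ (⊤ : Subgroup G).lowerCentralSeries k) :
    f x ∈ (⊤ : Subgroup K).lowerCentralSeries k := by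
  have := mem_map_of_mem f hx
  rw [map_lowerCentralSeries] at this
  exact lowerCentralSeries_mono k le_top this

end Subgroup

section UnitsFiltration

variable {A : Type*} [Ring A] (F : ℕ → AddSubgroup A) [SetLike.GradedMonoid F]

/-- Asking for `u⁻¹ - 1 ∈ F k` as well gives closure under inverses without any nilpotence
argument. -/
def unitsFiltration (hF : Antitone F) (k : ℕ) : Subgroup Aˣ where
  carrier := {u | (u : A) - 1 ∈ F k ∧ ((u⁻¹ : Aˣ) : A) - 1 ∈ F k}
  one_mem' := by simp
  mul_mem' := by
    have key (u v : A) (hu : u - 1 ∈ F k) (hv : v - 1 ∈ F k) : u * v - 1 ∈ F k := by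
      have : u * v - 1 = (u - 1) * (v - 1) + (u - 1) + (v - 1) := by noncomm_ring
      rw [this]
      exact add_mem (add_mem (hF (Nat.le_add_left k k) (SetLike.mul_mem_graded hu hv)) hu) hv
    rintro u v ⟨hu, hu'⟩ ⟨hv, hv'⟩
    exact ⟨key _ _ hu hv, by simpa using key _ _ hv' hu'⟩
  inv_mem' := by
    rintro u ⟨hu, hu'⟩
    exact ⟨hu', by simpa using hu⟩

variable {F} {hF : Antitone F}

theorem mem_unitsFiltration {k : ℕ} {u : Aˣ} :
    u ∈ unitsFiltration F hF k ↔ (u : A) - 1 ∈ F k ∧ ((u⁻¹ : Aˣ) : A) - 1 ∈ F k :=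
  Iff.rfl

omit [SetLike.GradedMonoid F] in
theorem mem_zero_of_sub_one_mem (hF : Antitone F) [SetLike.GradedOne F] {a : A} {k : ℕ}
    (ha : a - 1 ∈ F k) : a ∈ F 0 := by
  simpa using add_mem (hF (Nat.zero_le k) ha) SetLike.GradedOne.one_mem

theorem val_commutatorElement_sub_one_mem {p q : ℕ} {u w : Aˣ}
    (hu : u ∈ unitsFiltration F hF p) (hw : w ∈ unitsFiltration F hF q) :
    ((⁅u, w⁆ : Aˣ) : A) - 1 ∈ F (p + q) := by
  have hcomm : (u * w - w * u : A) ∈ F (p + q) := by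
    have : (u * w - w * u : A) = (u - 1) * (w - 1) - (w - 1) * (u - 1) := by noncomm_ring
    rw [this]
    exact sub_mem (SetLike.mul_mem_graded hu.1 hw.1)
      (add_comm q p ▸ SetLike.mul_mem_graded hw.1 hu.1)
  have hinv : ((u⁻¹ : Aˣ) : A) * ((w⁻¹ : Aˣ) : A) ∈ F 0 :=
    SetLike.mul_mem_graded (mem_zero_of_sub_one_mem hF hu.2) (mem_zero_of_sub_one_mem hF hw.2)
  have : ((⁅u, w⁆ : Aˣ) : A) - 1 =
      (u * w - w * u : A) * (((u⁻¹ : Aˣ) : A) * ((w⁻¹ : Aˣ) : A)) := by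
    simp only [commutatorElement_def, Units.val_mul, sub_mul]
    congr 1
    · simp [mul_assoc]
    · simp [mul_assoc]
  simpa [this] using SetLike.mul_mem_graded hcomm hinv

theorem commutatorElement_mem_unitsFiltration {p q : ℕ} {u w : Aˣ}
    (hu : u ∈ unitsFiltration F hF p) (hw : w ∈ unitsFiltration F hF q) :
    ⁅u, w⁆ ∈ unitsFiltration F hF (p + q) :=
  ⟨val_commutatorElement_sub_one_mem hu hw, by
    simpa [commutatorElement_inv, add_comm p q] using val_commutatorElement_sub_one_mem hw hu⟩

theorem lowerCentralSeries_le_comap_unitsFiltration {G : Type*} [Group G] {φ : G →* Aˣ}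
    (hφ : φ.range ≤ unitsFiltration F hF 1) (k : ℕ) :
    (⊤ : Subgroup G).lowerCentralSeries k ≤ (unitsFiltration F hF (k + 1)).comap φ := by
  refine Subgroup.descending_central_series_ge_lower
    (fun k => (unitsFiltration F hF (k + 1)).comap φ) ⟨?_, fun x k hx g => ?_⟩ k
  · exact eq_top_iff.mpr fun g _ => hφ ⟨g, rfl⟩
  · rw [Subgroup.mem_comap, map_commutatorElement]
    exact commutatorElement_mem_unitsFiltration hx (hφ ⟨g, rfl⟩)

end UnitsFiltration

namespace Matrix

section Superdiagonal

variable (R : Type*) [Ring R] (N : ℕ)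

def superdiagonalFiltration (k : ℕ) : AddSubgroup (Matrix (Fin N) (Fin N) R) where
  carrier := {A | ∀ i j : Fin N, (j : ℕ) < i + k → A i j = 0}
  zero_mem' _ _ _ := rfl
  add_mem' ha hb i j hij := by simp [ha i j hij, hb i j hij]
  neg_mem' ha i j hij := by simp [ha i j hij]

variable {R N}

theorem antitone_superdiagonalFiltration : Antitone (superdiagonalFiltration R N) :=
  fun _ _ hkl _ ha i j hij => ha i j (by omega)

instance : SetLike.GradedMonoid (superdiagonalFiltration R N) where
  one_mem i j hij := one_apply_ne (by rintro rfl; omega)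
  mul_mem p q A B hA hB i j hij := by
    rw [mul_apply]
    refine Finset.sum_eq_zero fun l _ => ?_
    by_cases hl : (l : ℕ) < i + p
    · rw [hA i l hl, zero_mul]
    · rw [hB l j (by omega), mul_zero]

theorem single_mem_superdiagonalFiltration_iff {i j : Fin N} {c : R} (hc : c ≠ 0) {k : ℕ} :
    single i j c ∈ superdiagonalFiltration R N k ↔ (i : ℕ) + k ≤ j := by
  refine ⟨fun h => ?_, fun h i' j' hij => ?_⟩
  · by_contra! hij
    exact hc (by simpa using h i j hij)
  · rw [single_apply_of_ne]
    rintro ⟨rfl, rfl⟩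
    omega

end Superdiagonal

section TransvectionUnit

variable {n : Type*} [Fintype n] [DecidableEq n] {R : Type*} [CommRing R]

def transvectionUnit {i j : n} (hij : i ≠ j) (c : R) : (Matrix n n R)ˣ where
  val := transvection i j c
  inv := transvection i j (-c)
  val_inv := by simp [transvection_mul_transvection_same _ _ hij]
  inv_val := by simp [transvection_mul_transvection_same _ _ hij]

theorem val_transvectionUnit {i j : n} (hij : i ≠ j) (c : R) :
    (transvectionUnit hij c : Matrix n n R) = transvection i j c := rfl

theorem inv_transvectionUnit {i j : n} (hij : i ≠ j) (c : R) :
    (transvectionUnit hij c)⁻¹ = transvectionUnit hij (-c) := Units.ext rfl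

theorem commutatorElement_transvectionUnit {i j k : n} (hij : i ≠ j) (hjk : j ≠ k)
    (hik : i ≠ k) (a b : R) :
    ⁅transvectionUnit hij a, transvectionUnit hjk b⁆ = transvectionUnit hik (a * b) := by
  ext : 1
  simp only [commutatorElement_def, inv_transvectionUnit, Units.val_mul, val_transvectionUnit,
    transvection]
  simp [add_mul, mul_add, hij.symm, hjk.symm, hik.symm, ← single_neg]
  abel

theorem transvectionUnit_mem_unitsFiltration_iff {N : ℕ} {i j : Fin N}
    (hij : i ≠ j) {c : R} (hc : c ≠ 0) {k : ℕ} :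
    transvectionUnit hij c ∈ unitsFiltration (superdiagonalFiltration R N)
      antitone_superdiagonalFiltration k ↔ (i : ℕ) + k ≤ j := by
  rw [mem_unitsFiltration, inv_transvectionUnit, val_transvectionUnit, val_transvectionUnit,
    transvection, transvection, add_sub_cancel_left, add_sub_cancel_left,
    single_mem_superdiagonalFiltration_iff hc, single_mem_superdiagonalFiltration_iff
    (neg_ne_zero.2 hc), and_self]

end TransvectionUnit

end Matrix

open Matrix

theorem FreeGroup.lift_map_apply {α β G : Type*} [Group G] (f : α → β) (g : β → G)
    (x : FreeGroup α) : FreeGroup.lift g (FreeGroup.map f x) = FreeGroup.lift (g ∘ f) x :=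
  DFunLike.congr_fun (FreeGroup.ext_hom _ _ fun a => by simp :
    (FreeGroup.lift g).comp (FreeGroup.map f) = FreeGroup.lift (g ∘ f)) x

theorem lift_transvectionUnit_bing {ι R : Type*} [Fintype ι] [DecidableEq ι] [CommRing R] :
    ∀ (n : ℕ) {e : Fin (2 ^ n + 1) → ι} (he : e.Injective),
    FreeGroup.lift (fun i => transvectionUnit (he.ne (Fin.castSucc_lt_succ (i := i)).ne) (1 : R))
        (bing n) =
      transvectionUnit (he.ne (Fin.last_pos').ne) 1
  | 0, e, he => by simp [bing]
  | n + 1, e, he => by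
    have hpow : 2 ^ (n + 1) = 2 ^ n + 2 ^ n := by rw [pow_succ, mul_two]
    let lo : Fin (2 ^ n + 1) → Fin (2 ^ (n + 1) + 1) := fun j => ⟨j, by omega⟩
    let hi : Fin (2 ^ n + 1) → Fin (2 ^ (n + 1) + 1) := fun j => ⟨2 ^ n + j, by omega⟩
    have hlo : (e ∘ lo).Injective := he.comp fun a b h => Fin.ext (by simpa [lo] using h)
    have hhi : (e ∘ hi).Injective := he.comp fun a b h => Fin.ext (by simpa [hi] using h)
    rw [bing, map_commutatorElement, FreeGroup.lift_map_apply, FreeGroup.lift_map_apply]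
    calc _ = ⁅transvectionUnit (hlo.ne Fin.last_pos'.ne) (1 : R),
            transvectionUnit (hhi.ne Fin.last_pos'.ne) 1⁆ :=
          congrArg₂ _ (lift_transvectionUnit_bing n hlo) (lift_transvectionUnit_bing n hhi)
      _ = transvectionUnit (he.ne (by simp [lo, hi, Fin.ext_iff]; positivity)) (1 * 1) :=
          commutatorElement_transvectionUnit _ _ _ _ _
      _ = _ := by
            rw [mul_one]
            congr
            exact Fin.ext hpow.symm

theorem bing_mem_lowerCentralSeries : ∀ n : ℕ,
    bing n ∈ (⊤ : Subgroup (FreeGroup (Fin (2 ^ n)))).lowerCentralSeries (2 ^ n - 1)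
  | 0 => Subgroup.mem_top _
  | n + 1 => by
    have hidx : 2 ^ n - 1 + (2 ^ n - 1) + 1 = 2 ^ (n + 1) - 1 := by
      have := Nat.one_le_two_pow (n := n)
      rw [pow_succ]
      omega
    rw [bing, ← hidx]
    exact Subgroup.commutator_lowerCentralSeries_le _ _ <| Subgroup.commutator_mem_commutator
      (Subgroup.map_mem_lowerCentralSeries _ (bing_mem_lowerCentralSeries n))
      (Subgroup.map_mem_lowerCentralSeries _ (bing_mem_lowerCentralSeries n))

/-- The paper's `F^k` is Mathlib's `lowerCentralSeries ⊤ (k - 1)`. -/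
theorem bing_mem_lcs_not_mem_succ (n : ℕ) :
    bing n ∈ Subgroup.lowerCentralSeries (⊤ : Subgroup (FreeGroup (Fin (2 ^ n)))) (2 ^ n - 1) ∧
    bing n ∉ Subgroup.lowerCentralSeries (⊤ : Subgroup (FreeGroup (Fin (2 ^ n)))) (2 ^ n) := by
  refine ⟨bing_mem_lowerCentralSeries n, fun hmem => ?_⟩
  let U := unitsFiltration (superdiagonalFiltration ℤ (2 ^ n + 1)) antitone_superdiagonalFiltration
  let φ := FreeGroup.lift fun i : Fin (2 ^ n) =>
    transvectionUnit (Fin.castSucc_lt_succ (i := i)).ne (1 : ℤ)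
  have hgen : φ.range ≤ U 1 := FreeGroup.range_lift_le <| Set.range_subset_iff.2 fun i =>
    (transvectionUnit_mem_unitsFiltration_iff _ one_ne_zero).2 (by simp)
  have hφ : φ (bing n) = transvectionUnit (Fin.last_pos' (n := 2 ^ n)).ne 1 :=
    lift_transvectionUnit_bing n Function.injective_id
  have hmem' := lowerCentralSeries_le_comap_unitsFiltration hgen (2 ^ n) hmem
  rw [Subgroup.mem_comap, hφ, transvectionUnit_mem_unitsFiltration_iff _ one_ne_zero] at hmem'
  simp at hmem'
end

section
/- Let G and H be groups and φ : G → H a homomorphism inducing an isomorphism on abelianizations and a surjection H_2(G;ℤ) → H_2(H;ℤ) on second group homology. Then for each finite k, φ induces an isomorphism G/G^k ≅ H/H^k. -/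
/-- The kernel `R` of the canonical presentation `FreeGroup G →* G` (sending each
generator `g` to `g`), so that `G ≅ FreeGroup G / R`. -/
def presentationKernel (G : Type*) [Group G] : Subgroup (FreeGroup G) :=
  (FreeGroup.lift (id : G → G)).ker

/-- The subgroup `R ⊓ [F, F]` of `F = FreeGroup G` appearing in Hopf's formula. -/
def hopfSubgroup (G : Type*) [Group G] : Subgroup (FreeGroup G) :=
  presentationKernel G ⊓ commutator (FreeGroup G)

instance (G : Type*) [Group G] : (presentationKernel G).Normal :=
  MonoidHom.normal_ker _

/-- The second group homology `H₂(G; ℤ)`, defined via Hopf's formula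
`H₂(G; ℤ) ≅ (R ⊓ [F, F]) / [F, R]` for the canonical presentation `G = F / R`,
`F = FreeGroup G`. -/
def H2 (G : Type*) [Group G] : Type _ :=
  ↥(hopfSubgroup G) ⧸
    ((⁅(⊤ : Subgroup (FreeGroup G)), presentationKernel G⁆).subgroupOf (hopfSubgroup G))

instance (G : Type*) [Group G] : Group (H2 G) := by
  unfold H2; infer_instance


/-! Surjectivity at every level is automatic: a subgroup generating modulo the commutator
subgroup generates modulo every `γ n`, since `γ n` is central modulo `γ (n + 1)`.

Injectivity goes by induction. Let `F`, `F'` be the free groups on `G`, `H` and `R`, `R'` the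
kernels of `F → G`, `F' → H`. Given `φ g ∈ γ (n + 1)`, lift `g` to `c ∈ [F, F]`; correcting `c` by
an element of `R ⊓ [F, F]` supplied by the surjectivity on `H₂ = (R ⊓ [F, F]) / [F, R]`, its image
lies in `γ (n + 1) F' ⊔ [F', R']`. Since `F'` is free, the isomorphism `G / γ n ≅ H / γ n` lifts to
`h : F' →* F` with `h ∘ FreeGroup.map φ ≡ id` modulo `S`, the preimage of `γ n` in `F`. Modulo
`[F, S]` the subgroup `S` is central, so `h ∘ FreeGroup.map φ` fixes commutators modulo `[F, S]`;
this puts `c` in `[F, S]`, whose image in `G` is `γ (n + 1)`. -/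

open Subgroup QuotientGroup
open scoped commutatorElement

local notation "γ" => Subgroup.lowerCentralSeries ⊤

section Center

variable {F Q : Type*} [Group F] [Group Q]

theorem commutatorElement_mul_mem_center {z w : Q} (hz : z ∈ center Q) (hw : w ∈ center Q)
    (a b : Q) : ⁅a * z, b * w⁆ = ⁅a, b⁆ := by
  have hz' := mem_center_iff.mp hz
  have hw' := mem_center_iff.mp hw
  calc ⁅a * z, b * w⁆ = a * (z * (b * w)) * z⁻¹ * a⁻¹ * w⁻¹ * b⁻¹ := by group
    _ = a * (b * w * z) * z⁻¹ * a⁻¹ * w⁻¹ * b⁻¹ := by rw [hz' (b * w)]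
    _ = a * b * (w * a⁻¹) * w⁻¹ * b⁻¹ := by group
    _ = a * b * (a⁻¹ * w) * w⁻¹ * b⁻¹ := by rw [hw' a⁻¹]
    _ = ⁅a, b⁆ := by group

theorem commutator_le_of_sup_center_eq_top {K : Subgroup Q} (h : K ⊔ center Q = ⊤) :
    commutator Q ≤ K := by
  rw [commutator_def, commutator_le]
  intro a _ b _
  have hmem (x : Q) : x ∈ (↑(K ⊔ center Q) : Set Q) := by rw [h]; trivial
  obtain ⟨k, hk, z, hz, rfl⟩ := mul_normal K (center Q) ▸ hmem a
  obtain ⟨l, hl, w, hw, rfl⟩ := mul_normal K (center Q) ▸ hmem b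
  rw [commutatorElement_mul_mem_center hz hw, commutatorElement_def]
  exact mul_mem (mul_mem (mul_mem hk hl) (inv_mem hk)) (inv_mem hl)

theorem map_mk'_le_center {S N : Subgroup F} [N.Normal] (h : ⁅S, ⊤⁆ ≤ N) :
    S.map (mk' N) ≤ center (F ⧸ N) := by
  rw [← commutator_top_right_eq_bot_iff_le_center, ← map_top_of_surjective _ (mk'_surjective N),
    ← map_commutator, Subgroup.map_eq_bot_iff, ker_mk']
  exact h

theorem commutator_le_eqLocus_of_inv_mul_mem_center (f₁ f₂ : F →* Q)
    (h : ∀ x, (f₁ x)⁻¹ * f₂ x ∈ center Q) : commutator F ≤ f₁.eqLocus f₂ := by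
  rw [commutator_def, commutator_le]
  intro a _ b _
  have hf₂ (x : F) : f₂ x = f₁ x * ((f₁ x)⁻¹ * f₂ x) := (mul_inv_cancel_left _ _).symm
  change f₁ ⁅a, b⁆ = f₂ ⁅a, b⁆
  rw [map_commutatorElement, map_commutatorElement, hf₂ a, hf₂ b,
    commutatorElement_mul_mem_center (h a) (h b)]

end Center

section LowerCentralSeries

variable {G H : Type*} [Group G] [Group H]

theorem map_lowerCentralSeries_of_surjective {f : G →* H} (hf : Function.Surjective f) (n : ℕ) :
    (γ n : Subgroup G).map f = γ n := by
  rw [map_lowerCentralSeries, map_top_of_surjective f hf]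

theorem map_lowerCentralSeries_le (f : G →* H) (n : ℕ) : (γ n : Subgroup G).map f ≤ γ n := by
  rw [map_lowerCentralSeries]
  exact lowerCentralSeries_mono n le_top

theorem lowerCentralSeries_le_commutator {n : ℕ} (hn : 1 ≤ n) :
    (γ n : Subgroup G) ≤ commutator G :=
  top_lowerCentralSeries_one (G := G) ▸ Subgroup.lowerCentralSeries_antitone _ hn

theorem sup_lowerCentralSeries_eq_top {K : Subgroup G} (hK : K ⊔ commutator G = ⊤) :
    ∀ n, K ⊔ γ n = ⊤
  | 0 => sup_top_eq K
  | n + 1 => by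
    set N : Subgroup G := γ (n + 1)
    have hN : Function.Surjective (mk' N) := mk'_surjective N
    have hcenter : K.map (mk' N) ⊔ center (G ⧸ N) = ⊤ := by
      refine eq_top_iff.mpr (le_trans (b := (K ⊔ γ n).map (mk' N)) ?_ ?_)
      · rw [sup_lowerCentralSeries_eq_top hK n, map_top_of_surjective _ hN]
      · rw [Subgroup.map_sup]
        exact sup_le_sup_left (map_mk'_le_center le_rfl) _
    have hmap : K.map (mk' N) = ⊤ := by
      refine eq_top_iff.mpr (le_trans (b := (K ⊔ commutator G).map (mk' N)) ?_ ?_)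
      · rw [hK, map_top_of_surjective _ hN]
      · rw [Subgroup.map_sup, commutator_def, map_commutator, map_top_of_surjective _ hN]
        exact sup_le le_rfl (commutator_le_of_sup_center_eq_top hcenter)
    rw [sup_comm, ← comap_map_mk', hmap, comap_top]

end LowerCentralSeries

namespace QuotientGroup

variable {G H : Type*} [Group G] [Group H] {N : Subgroup G} [N.Normal] {M : Subgroup H} [M.Normal]
  {f : G →* H}

theorem map_injective_iff (h : N ≤ M.comap f) :
    Function.Injective (map N M f h) ↔ M.comap f ≤ N := by
  rw [← MonoidHom.ker_eq_bot_iff, ker_map, Subgroup.map_eq_bot_iff, ker_mk']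

theorem map_surjective_iff (h : N ≤ M.comap f) :
    Function.Surjective (map N M f h) ↔ f.range ⊔ M = ⊤ := by
  constructor
  · intro hf
    refine eq_top_iff.mpr fun y _ => ?_
    obtain ⟨x, hx⟩ := hf y
    induction x using QuotientGroup.induction_on with | H g => ?_
    rw [map_mk, QuotientGroup.eq] at hx
    simpa using mul_mem (mem_sup_left (MonoidHom.mem_range.mpr ⟨g, rfl⟩))
      (mem_sup_right hx : _ ∈ f.range ⊔ M)
  · intro hf q
    induction q using QuotientGroup.induction_on with | H y => ?_
    have hy : y ∈ (↑(f.range ⊔ M) : Set H) := by rw [hf]; trivial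
    obtain ⟨_, ⟨g, rfl⟩, z, hz, rfl⟩ := mul_normal f.range M ▸ hy
    exact ⟨g, by rw [map_mk, QuotientGroup.eq]; simpa using hz⟩

end QuotientGroup

section QuotientMap

variable {G H : Type*} [Group G] [Group H]

def lowerCentralQuotientMap (φ : G →* H) (n : ℕ) :
    G ⧸ (γ n : Subgroup G) →* H ⧸ (γ n : Subgroup H) :=
  QuotientGroup.map _ _ φ (map_le_iff_le_comap.mp (map_lowerCentralSeries_le φ n))

theorem lowerCentralQuotientMap_surjective {φ : G →* H}
    (h : Function.Surjective (lowerCentralQuotientMap φ 1)) (n : ℕ) :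
    Function.Surjective (lowerCentralQuotientMap φ n) := by
  rw [lowerCentralQuotientMap, map_surjective_iff] at h ⊢
  rw [top_lowerCentralSeries_one] at h
  exact sup_lowerCentralSeries_eq_top h n

end QuotientMap

namespace FreeGroup

variable {β F Q : Type*} [Group F] [Group Q]

theorem prod_map {G H : Type*} [Group G] [Group H] (φ : G →* H) (w : FreeGroup G) :
    prod (map φ w) = φ (prod w) :=
  DFunLike.congr_fun (ext_hom (prod.comp (map φ)) (φ.comp prod) fun _ => by simp) w

theorem exists_comp_eq_of_surjective {p : F →* Q} (hp : Function.Surjective p)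
    (q : FreeGroup β →* Q) : ∃ h : FreeGroup β →* F, p.comp h = q :=
  ⟨lift (Function.surjInv hp ∘ q ∘ of), ext_hom _ _ fun b => by simp [Function.surjInv_eq]⟩

theorem ker_mk'_comp_prod {G : Type*} [Group G] (N : Subgroup G) [N.Normal] :
    ((mk' N).comp prod).ker = N.comap prod := by
  rw [← MonoidHom.comap_ker, ker_mk']

end FreeGroup

section Rigidity

variable {F F' : Type*} [Group F] [Group F']

theorem mem_commutator_top_of_map_mem {S : Subgroup F} [S.Normal] {S' : Subgroup F'}
    {f : F →* F'} {h : F' →* F} (hS : S' ≤ S.comap h) (hhf : ∀ w, (h (f w))⁻¹ * w ∈ S)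
    {c : F} (hc : c ∈ commutator F) (hfc : f c ∈ ⁅(⊤ : Subgroup F'), S'⁆) :
    c ∈ ⁅(⊤ : Subgroup F), S⁆ := by
  set N := ⁅(⊤ : Subgroup F), S⁆
  have hcenter : S.map (mk' N) ≤ center (F ⧸ N) := map_mk'_le_center (commutator_comm S ⊤).le
  have hagree : mk' N (h (f c)) = mk' N c :=
    commutator_le_eqLocus_of_inv_mul_mem_center ((mk' N).comp (h.comp f)) (mk' N)
      (fun w => hcenter ⟨_, hhf w, by simp⟩) hc
  have hhfc : h (f c) ∈ N := by
    have := mem_map_of_mem h hfc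
    rw [map_commutator] at this
    exact commutator_mono le_top (map_le_iff_le_comap.mpr hS) this
  simpa using mul_mem hhfc (QuotientGroup.eq.mp hagree)

theorem mem_commutator_ker_of_map_mem {β Q Q' : Type*} [Group Q] [Group Q'] {q : F →* Q}
    {q' : FreeGroup β →* Q'} {f : F →* FreeGroup β} {Φ : Q →* Q'} (hΦ : Function.Bijective Φ)
    (hq : Function.Surjective q) (hf : Φ.comp q = q'.comp f) {c : F} (hc : c ∈ commutator F)
    (hfc : f c ∈ ⁅(⊤ : Subgroup (FreeGroup β)), q'.ker⁆) : c ∈ ⁅(⊤ : Subgroup F), q.ker⁆ := by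
  obtain ⟨h, hh⟩ := FreeGroup.exists_comp_eq_of_surjective (p := Φ.comp q) (hΦ.2.comp hq) q'
  have hqh (w : FreeGroup β) : Φ (q (h w)) = q' w := DFunLike.congr_fun hh w
  refine mem_commutator_top_of_map_mem (f := f) (h := h) (fun w hw => ?_) (fun w => ?_) hc hfc
  · refine hΦ.1 ?_
    rw [hqh, map_one]
    exact hw
  · have : q (h (f w)) = q w := hΦ.1 (by rw [hqh]; exact (DFunLike.congr_fun hf w).symm)
    simp [this]

end Rigidity

section Stallings

variable {G H : Type*} [Group G] [Group H] (φ : G →* H)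

theorem exists_lift_mem_commutator
    (hH2 : ∀ y ∈ hopfSubgroup H, ∃ x ∈ hopfSubgroup G,
      (FreeGroup.map φ x)⁻¹ * y ∈ ⁅(⊤ : Subgroup (FreeGroup H)), presentationKernel H⁆)
    {n : ℕ} (hn : 1 ≤ n) {g : G} (hg : g ∈ γ n) (hφg : φ g ∈ γ (n + 1)) :
    ∃ c ∈ commutator (FreeGroup G), FreeGroup.prod c = g ∧
      FreeGroup.map φ c ∈ γ (n + 1) ⊔ ⁅(⊤ : Subgroup (FreeGroup H)), presentationKernel H⁆ := by
  rw [← map_lowerCentralSeries_of_surjective FreeGroup.prod_surjective] at hg hφg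
  obtain ⟨c₀, hc₀, rfl⟩ := hg
  obtain ⟨d, hd, hdc₀⟩ := hφg
  set s := d⁻¹ * FreeGroup.map φ c₀
  have hs : s ∈ hopfSubgroup H := by
    refine mem_inf.mpr ⟨show FreeGroup.prod s = 1 by simp [s, FreeGroup.prod_map, hdc₀], ?_⟩
    exact mul_mem (inv_mem (lowerCentralSeries_le_commutator (by omega) hd))
      (lowerCentralSeries_le_commutator hn (map_lowerCentralSeries_le _ n ⟨c₀, hc₀, rfl⟩))
  obtain ⟨x, ⟨hxR : FreeGroup.prod x = 1, hxcomm⟩, hx⟩ := hH2 s hs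
  refine ⟨c₀ * x⁻¹, mul_mem (lowerCentralSeries_le_commutator hn hc₀) (inv_mem hxcomm),
    by simp [hxR], ?_⟩
  have hconj : FreeGroup.map φ (c₀ * x⁻¹) =
      d * (FreeGroup.map φ x * ((FreeGroup.map φ x)⁻¹ * s) * (FreeGroup.map φ x)⁻¹) := by
    simp only [s, map_mul, map_inv]; group
  rw [hconj]
  exact mul_mem (mem_sup_left hd)
    (mem_sup_right ((commutator_normal _ _).conj_mem _ hx _))

theorem lowerCentralQuotientMap_injective_succ
    (hH2 : ∀ y ∈ hopfSubgroup H, ∃ x ∈ hopfSubgroup G,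
      (FreeGroup.map φ x)⁻¹ * y ∈ ⁅(⊤ : Subgroup (FreeGroup H)), presentationKernel H⁆)
    {n : ℕ} (hn : 1 ≤ n) (hbij : Function.Bijective (lowerCentralQuotientMap φ n)) :
    Function.Injective (lowerCentralQuotientMap φ (n + 1)) := by
  have hinj := (map_injective_iff _).mp hbij.1
  refine (map_injective_iff _).mpr fun g hφg => ?_
  have hg : g ∈ γ n := hinj (Subgroup.lowerCentralSeries_antitone _ n.le_succ hφg)
  obtain ⟨c, hc, rfl, hφc⟩ := exists_lift_mem_commutator φ hH2 hn hg hφg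
  have hcompat : (lowerCentralQuotientMap φ n).comp ((mk' _).comp FreeGroup.prod) =
      ((mk' _).comp FreeGroup.prod).comp (FreeGroup.map φ) :=
    FreeGroup.ext_hom _ _ fun a => by simp [lowerCentralQuotientMap]
  have hφc' : FreeGroup.map φ c ∈
      ⁅(⊤ : Subgroup (FreeGroup H)), ((mk' (γ n)).comp FreeGroup.prod).ker⁆ := by
    rw [FreeGroup.ker_mk'_comp_prod]
    refine sup_le ?_ (commutator_mono le_rfl fun w (hw : FreeGroup.prod w = 1) => ?_) hφc
    · rw [Subgroup.lowerCentralSeries_succ, commutator_comm]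
      exact commutator_mono le_rfl (map_le_iff_le_comap.mp (map_lowerCentralSeries_le _ n))
    · simp [hw]
  have hc' := mem_map_of_mem FreeGroup.prod <| mem_commutator_ker_of_map_mem
    (q := (mk' (γ n)).comp FreeGroup.prod) hbij
    ((mk'_surjective _).comp FreeGroup.prod_surjective) hcompat hc hφc'
  rwa [map_commutator, FreeGroup.ker_mk'_comp_prod,
    map_comap_eq_self_of_surjective FreeGroup.prod_surjective,
    map_top_of_surjective _ FreeGroup.prod_surjective, ← commutator_comm,
    ← Subgroup.lowerCentralSeries_succ] at hc'

theorem lowerCentralQuotientMap_bijective (hab : Function.Bijective (Abelianization.map φ))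
    (hH2 : ∀ y ∈ hopfSubgroup H, ∃ x ∈ hopfSubgroup G,
      (FreeGroup.map φ x)⁻¹ * y ∈ ⁅(⊤ : Subgroup (FreeGroup H)), presentationKernel H⁆) :
    ∀ n, Function.Bijective (lowerCentralQuotientMap φ n)
  | 0 => ⟨(map_injective_iff _).mpr le_top, lowerCentralQuotientMap_surjective hab.2 0⟩
  | 1 => hab -- `Abelianization G` is `G ⧸ γ 1` by definition
  | n + 2 => ⟨lowerCentralQuotientMap_injective_succ φ hH2 (by omega)
      (lowerCentralQuotientMap_bijective hab hH2 (n + 1)),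
    lowerCentralQuotientMap_surjective hab.2 _⟩

end Stallings

/-- Stallings' theorem (integral version): if `φ : G →* H` induces an isomorphism on
abelianizations and a surjection `H₂(G; ℤ) → H₂(H; ℤ)` on second group homology
(`H₂` given by Hopf's formula `(R ⊓ [F,F]) / [F,R]`; the induced map on `H₂` sends the
class of `x` to the class of `FreeGroup.map φ x`, and its surjectivity is stated
elementwise), then for each finite `k`, `φ` induces an isomorphism `G/G^k ≅ H/H^k`,
where paper's `G^k` is Mathlib's `lowerCentralSeries G (k-1)`. -/
theorem stallings {G H : Type*} [Group G] [Group H] (φ : G →* H)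
    (hab : Function.Bijective (Abelianization.map φ))
    (hH2 : ∀ y ∈ hopfSubgroup H, ∃ x ∈ hopfSubgroup G,
      (FreeGroup.map φ x)⁻¹ * y ∈ ⁅(⊤ : Subgroup (FreeGroup H)), presentationKernel H⁆) :
    ∀ k : ℕ, 1 ≤ k → Function.Bijective
      (QuotientGroup.map ((⊤ : Subgroup G).lowerCentralSeries (k - 1)) ((⊤ : Subgroup H).lowerCentralSeries (k - 1)) φ
        (Subgroup.map_le_iff_le_comap.mp (Subgroup.lowerCentralSeries.map φ (k - 1)))) :=
  fun k _ => lowerCentralQuotientMap_bijective φ hab hH2 (k - 1)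
end

section
/- Let μ be the Magnus expansion of the free group F on x_1, ..., x_N. For an iterated commutator c of weight l using each of the distinct generators x_{i_1}, ..., x_{i_l} exactly once, the degree-l part of μ(c) is a nonzero ℤ-linear combination of monomials in X_{i_1}, ..., X_{i_l}. -/
set_option linter.unusedSectionVars false

noncomputable section

open scoped commutatorElement

/-- `IterComm L c` : `c` is an iterated commutator built by repeated commutator brackets
from the generators listed in `L`, each used exactly once (weight = `L.length`). -/
inductive IterComm {N : ℕ} : List (Fin N) → FreeGroup (Fin N) → Prop
  | of (i : Fin N) : IterComm [i] (FreeGroup.of i)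
  | comm {L₁ L₂ : List (Fin N)} {c₁ c₂ : FreeGroup (Fin N)} :
      IterComm L₁ c₁ → IterComm L₂ c₂ → IterComm (L₁ ++ L₂) ⁅c₁, c₂⁆

/-!
Write `a = μ(c) - 1`. By induction on `c`, `a` has no terms of degree below `l`, and `μ(c)` only
involves the variables `X_i` with `i ∈ L`: such series are the fixed points of the ring
endomorphism killing the other variables, so they form a subring closed under inverses of units.
For `c = ⁅c₁, c₂⁆` one has `μ(c) - 1 = (a₁ a₂ - a₂ a₁) μ(c₁)⁻¹ μ(c₂)⁻¹`, whose degree `l₁ + l₂`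
part is that of `a₁ a₂ - a₂ a₁`. If `u₁`, `u₂` are words of degrees `l₁`, `l₂` with
`a₁(u₁) ≠ 0 ≠ a₂(u₂)`, then the coefficient of `a₂ a₁` at `u₁ u₂` vanishes, because `u₁` starts
with a letter of `L₁`, which does not occur in `L₂`; so `μ(c)` has coefficient `a₁(u₁) a₂(u₂) ≠ 0`
at `u₁ u₂`.
-/

theorem Units.val_commutatorElement_sub_one {R : Type*} [Ring R] (A B : Rˣ) :
    (↑⁅A, B⁆ : R) - 1 = ((↑A - 1) * (↑B - 1) - (↑B - 1) * (↑A - 1)) * ↑(A⁻¹ * B⁻¹) := by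
  have hBA : (B : R) * A * ↑(A⁻¹ * B⁻¹) = 1 := by
    rw [Units.val_mul, mul_assoc, ← mul_assoc (A : R), Units.mul_inv, one_mul, Units.mul_inv]
  rw [show ((↑A - 1) * (↑B - 1) - (↑B - 1) * (↑A - 1) : R) = ↑A * ↑B - ↑B * ↑A by noncomm_ring,
    sub_mul, hBA, commutatorElement_def]
  simp only [Units.val_mul, mul_assoc]

namespace NCSeries

variable {σ : Type} [DecidableEq σ]

theorem sub_def (f g : NCSeries σ) (w : List σ) : (f - g) w = f w - g w := rfl

theorem mul_apply_nil (f g : NCSeries σ) : (f * g) [] = f [] * g [] := by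
  simp [mul_def]

theorem units_inv_apply_nil {U : (NCSeries σ)ˣ} (hU : (U : NCSeries σ) [] = 1) :
    (↑U⁻¹ : NCSeries σ) [] = 1 := by
  simpa [mul_apply_nil, hU, one_def] using congrFun U.mul_inv []

def VanishesBelow (n : ℕ) (f : NCSeries σ) : Prop :=
  ∀ w : List σ, w.length < n → f w = 0

theorem vanishesBelow_zero (f : NCSeries σ) : VanishesBelow 0 f :=
  fun _ h => absurd h (Nat.not_lt_zero _)

theorem VanishesBelow.sub {n : ℕ} {f g : NCSeries σ} (hf : VanishesBelow n f)
    (hg : VanishesBelow n g) : VanishesBelow n (f - g) := fun w hw => by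
  rw [sub_def, hf w hw, hg w hw, sub_zero]

theorem VanishesBelow.mul {n m : ℕ} {f g : NCSeries σ} (hf : VanishesBelow n f)
    (hg : VanishesBelow m g) : VanishesBelow (n + m) (f * g) := fun w hw => by
  refine Finset.sum_eq_zero fun i hi => ?_
  rw [Finset.mem_range] at hi
  rcases lt_or_ge i n with hin | hin
  · rw [hf _ (by rw [List.length_take]; omega), zero_mul]
  · rw [hg _ (by rw [List.length_drop]; omega), mul_zero]

theorem VanishesBelow.mul_sub_mul_swap {n m : ℕ} {f g : NCSeries σ} (hf : VanishesBelow n f)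
    (hg : VanishesBelow m g) : VanishesBelow (n + m) (f * g - g * f) :=
  (hf.mul hg).sub (add_comm n m ▸ hg.mul hf)

theorem VanishesBelow.mul_apply {n m : ℕ} {f g : NCSeries σ} (hf : VanishesBelow n f)
    (hg : VanishesBelow m g) {w : List σ} (hw : w.length = n + m) :
    (f * g) w = f (w.take n) * g (w.drop n) := by
  rw [mul_def, Finset.sum_eq_single n]
  · intro i hi hin
    rw [Finset.mem_range] at hi
    rcases lt_or_gt_of_ne hin with hin | hin
    · rw [hf _ (by rw [List.length_take]; omega), zero_mul]
    · rw [hg _ (by rw [List.length_drop]; omega), mul_zero]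
  · intro hn
    exact absurd (Finset.mem_range.2 (by omega)) hn

theorem VanishesBelow.mul_apply_of_length_eq {n : ℕ} {f : NCSeries σ} (hf : VanishesBelow n f)
    (g : NCSeries σ) {w : List σ} (hw : w.length = n) : (f * g) w = f w * g [] := by
  rw [hf.mul_apply (vanishesBelow_zero g) (by rw [hw, add_zero]), ← hw, List.take_length,
    List.drop_length]

def SupportedIn (S : Set σ) (f : NCSeries σ) : Prop :=
  ∀ w, f w ≠ 0 → ∀ x ∈ w, x ∈ S

theorem SupportedIn.mono {S T : Set σ} {f : NCSeries σ} (hf : SupportedIn S f) (hST : S ⊆ T) :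
    SupportedIn T f := fun w hw x hx => hST (hf w hw x hx)

open scoped Classical in
/-- Setting to zero every variable outside `S`. -/
def restrict (S : Set σ) : NCSeries σ →+* NCSeries σ where
  toFun f w := if ∀ x ∈ w, x ∈ S then f w else 0
  map_one' := by
    funext w
    by_cases hw : w = [] <;> simp [one_def, hw]
  map_mul' f g := by
    funext w
    have hsplit (i : ℕ) :
        (∀ x ∈ w, x ∈ S) ↔ (∀ x ∈ w.take i, x ∈ S) ∧ ∀ x ∈ w.drop i, x ∈ S := by
      rw [← List.forall_mem_append, List.take_append_drop]
    show (if ∀ x ∈ w, x ∈ S then (f * g) w else 0) =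
      ∑ i ∈ Finset.range (w.length + 1),
        (if ∀ x ∈ w.take i, x ∈ S then f (w.take i) else 0) *
          (if ∀ x ∈ w.drop i, x ∈ S then g (w.drop i) else 0)
    simp only [ite_zero_mul_ite_zero, ← hsplit, Finset.sum_ite_irrel, Finset.sum_const_zero,
      mul_def]
  map_zero' := funext fun _ => ite_self 0
  map_add' f g := funext fun _ => ite_add_zero

open scoped Classical in
theorem restrict_apply (S : Set σ) (f : NCSeries σ) (w : List σ) :
    restrict S f w = if ∀ x ∈ w, x ∈ S then f w else 0 := rfl

theorem restrict_eq_self_iff {S : Set σ} {f : NCSeries σ} :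
    restrict S f = f ↔ SupportedIn S f := by
  refine ⟨fun h w hw x hx => ?_, fun h => funext fun w => ?_⟩
  · rw [← h, restrict_apply] at hw
    by_contra hxS
    exact hw (if_neg fun hwS => hxS (hwS x hx))
  · rw [restrict_apply]
    split_ifs with hwS
    · rfl
    · by_contra hfw
      exact hwS (h w (Ne.symm hfw))

theorem SupportedIn.one (S : Set σ) : SupportedIn S (1 : NCSeries σ) :=
  restrict_eq_self_iff.1 (map_one _)

theorem SupportedIn.sub {S : Set σ} {f g : NCSeries σ} (hf : SupportedIn S f)
    (hg : SupportedIn S g) : SupportedIn S (f - g) := by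
  rw [← restrict_eq_self_iff] at *
  rw [map_sub, hf, hg]

theorem SupportedIn.mul {S : Set σ} {f g : NCSeries σ} (hf : SupportedIn S f)
    (hg : SupportedIn S g) : SupportedIn S (f * g) := by
  rw [← restrict_eq_self_iff] at *
  rw [map_mul, hf, hg]

/-- `restrict S` is a ring endomorphism fixing `U`, so `restrict S U⁻¹` is also inverse to `U`. -/
theorem SupportedIn.units_inv {S : Set σ} {U : (NCSeries σ)ˣ} (hU : SupportedIn S ↑U) :
    SupportedIn S ↑U⁻¹ := by
  rw [← restrict_eq_self_iff] at *
  refine (Units.inv_eq_of_mul_eq_one_left ?_).symm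
  rw [← hU, ← map_mul, Units.inv_mul, map_one]

theorem supportedIn_one_add_X (i : σ) : SupportedIn {i} (1 + X i) := by
  intro w hw x hx
  by_cases hi : w = [i]
  · simpa [hi] using hx
  · have hw' : w = [] := by
      by_contra h
      exact hw (by simp [add_def, one_def, X, h, hi])
    simp [hw'] at hx

theorem X_vanishesBelow_one (i : σ) : VanishesBelow 1 (X i) := fun w hw => by
  simp [X, List.length_eq_zero_iff.1 (Nat.lt_one_iff.1 hw)]

theorem X_apply_singleton (i : σ) : X i [i] = 1 := if_pos rfl

variable {A B : (NCSeries σ)ˣ} {n m : ℕ}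

theorem vanishesBelow_commutatorElement_sub_one (hA : VanishesBelow n (↑A - 1 : NCSeries σ))
    (hB : VanishesBelow m (↑B - 1 : NCSeries σ)) :
    VanishesBelow (n + m) (↑⁅A, B⁆ - 1 : NCSeries σ) := by
  rw [Units.val_commutatorElement_sub_one]
  exact (hA.mul_sub_mul_swap hB).mul (vanishesBelow_zero _)

/-- The term of `(B - 1) * (A - 1)` at `u₁ ++ u₂` vanishes: the first letter of `u₁` is in `S`,
hence not in `T`. -/
theorem commutatorElement_sub_one_apply_append (hA : VanishesBelow n (↑A - 1 : NCSeries σ))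
    (hB : VanishesBelow m (↑B - 1 : NCSeries σ)) (hn : 0 < n) (hm : 0 < m) {S T : Set σ}
    (hST : Disjoint S T) (hAS : SupportedIn S ↑A) (hBT : SupportedIn T ↑B)
    {u₁ u₂ : List σ} (hu₁ : u₁.length = n) (hu₂ : u₂.length = m)
    (hAu₁ : (↑A - 1 : NCSeries σ) u₁ ≠ 0) :
    (↑⁅A, B⁆ - 1 : NCSeries σ) (u₁ ++ u₂) =
      (↑A - 1 : NCSeries σ) u₁ * (↑B - 1 : NCSeries σ) u₂ := by
  have hw : (u₁ ++ u₂).length = n + m := by rw [List.length_append, hu₁, hu₂]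
  have hA₀ : (A : NCSeries σ) [] = 1 := by simpa [sub_def, one_def, sub_eq_zero] using hA [] hn
  have hB₀ : (B : NCSeries σ) [] = 1 := by simpa [sub_def, one_def, sub_eq_zero] using hB [] hm
  obtain ⟨x, t, rfl⟩ := List.exists_cons_of_length_pos (hu₁ ▸ hn)
  have hxS : x ∈ S := (hAS.sub (.one S)) _ hAu₁ x List.mem_cons_self
  have hBx : (↑B - 1 : NCSeries σ) ((x :: t ++ u₂).take m) = 0 := by
    by_contra hne
    obtain ⟨m, rfl⟩ := Nat.exists_eq_add_of_lt hm
    exact hST.notMem_of_mem_left hxS ((hBT.sub (.one T)) _ hne x (by simp))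
  rw [Units.val_commutatorElement_sub_one,
    (hA.mul_sub_mul_swap hB).mul_apply_of_length_eq _ hw, sub_def,
    hA.mul_apply hB hw, hB.mul_apply hA (by rw [hw, add_comm]), hBx, Units.val_mul,
    mul_apply_nil, units_inv_apply_nil hA₀, units_inv_apply_nil hB₀, ← hu₁, List.take_left,
    List.drop_left]
  ring

end NCSeries

open NCSeries

theorem magnus_of {N : ℕ} (i : Fin N) :
    (magnus N (FreeGroup.of i) : NCSeries (Fin N)) = 1 + X i := by
  rw [magnus, FreeGroup.lift_apply_of]
  rfl

namespace IterComm

variable {N : ℕ} {L : List (Fin N)} {c : FreeGroup (Fin N)}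

theorem length_pos (h : IterComm L c) : 0 < L.length := by
  induction h with
  | of i => simp
  | comm _ _ ih₁ _ => rw [List.length_append]; omega

theorem supportedIn_magnus (h : IterComm L c) :
    SupportedIn {x | x ∈ L} (magnus N c : NCSeries (Fin N)) := by
  induction h with
  | of i => simpa [magnus_of] using supportedIn_one_add_X i
  | @comm L₁ L₂ _ _ _ _ ih₁ ih₂ =>
    have h₁ := ih₁.mono fun x hx => List.mem_append_left L₂ hx
    have h₂ := ih₂.mono fun x hx => List.mem_append_right L₁ hx
    rw [map_commutatorElement, commutatorElement_def]
    exact ((h₁.mul h₂).mul h₁.units_inv).mul h₂.units_inv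

theorem vanishesBelow_magnus_sub_one (h : IterComm L c) :
    VanishesBelow L.length ((magnus N c : NCSeries (Fin N)) - 1) := by
  induction h with
  | of i => simpa [magnus_of] using X_vanishesBelow_one i
  | comm _ _ ih₁ ih₂ =>
    rw [map_commutatorElement, List.length_append]
    exact vanishesBelow_commutatorElement_sub_one ih₁ ih₂

theorem exists_magnus_sub_one_apply_ne_zero (h : IterComm L c) (hnd : L.Nodup) :
    ∃ u : List (Fin N), u.length = L.length ∧ ((magnus N c : NCSeries (Fin N)) - 1) u ≠ 0 := by
  induction h with
  | of i => exact ⟨[i], rfl, by simp [magnus_of, X_apply_singleton]⟩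
  | comm h₁ h₂ ih₁ ih₂ =>
    obtain ⟨hnd₁, hnd₂, hdisj⟩ := List.nodup_append'.1 hnd
    obtain ⟨u₁, hu₁, hAu₁⟩ := ih₁ hnd₁
    obtain ⟨u₂, hu₂, hBu₂⟩ := ih₂ hnd₂
    refine ⟨u₁ ++ u₂, by simp [hu₁, hu₂], ?_⟩
    rw [map_commutatorElement, commutatorElement_sub_one_apply_append
      h₁.vanishesBelow_magnus_sub_one h₂.vanishesBelow_magnus_sub_one h₁.length_pos
      h₂.length_pos (Set.disjoint_left.2 fun x hx₁ hx₂ => hdisj hx₁ hx₂)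
      h₁.supportedIn_magnus h₂.supportedIn_magnus hu₁ hu₂ hAu₁]
    exact mul_ne_zero hAu₁ hBu₂

end IterComm

/-- For an iterated commutator `c` of weight `l` using distinct generators each exactly
once, the degree-`l` part of the Magnus expansion `μ(c)` is a nonzero `ℤ`-linear
combination of monomials in those variables: some coefficient at a word of length `l`
is nonzero, and every word of length `l` with nonzero coefficient uses only the listed
generators. -/
theorem magnus_degree_part_of_iterComm (N : ℕ) (L : List (Fin N)) (c : FreeGroup (Fin N))
    (h : IterComm L c) (hnd : L.Nodup) :
    (∃ u : List (Fin N), u.length = L.length ∧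
        ((magnus N c : (NCSeries (Fin N))ˣ) : NCSeries (Fin N)) u ≠ 0) ∧
    (∀ u : List (Fin N), u.length = L.length →
        ((magnus N c : (NCSeries (Fin N))ˣ) : NCSeries (Fin N)) u ≠ 0 →
        ∀ x ∈ u, x ∈ L) := by
  obtain ⟨u, hlen, hu⟩ := h.exists_magnus_sub_one_apply_ne_zero hnd
  have hu_ne : u ≠ [] := List.ne_nil_of_length_pos (hlen ▸ h.length_pos)
  refine ⟨⟨u, hlen, ?_⟩, fun u _ hu => h.supportedIn_magnus u hu⟩
  rwa [sub_def, one_def, if_neg hu_ne, sub_zero] at hu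

end
end
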